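/- If f : X → [0,∞) has a closed graph and A ⊆ X, then the restriction of f to Cl(A) is continuous at every point of A^f_0. -/

import Mathlib

/-- `AInf f A` is the set `A^f_∞`. -/
def AInf {X : Type*} [TopologicalSpace X] (f : X → ℝ) (A : Set X) : Set X :=
  {x ∈ closure A | ∀ M > (0 : ℝ), ∀ U : Set X, IsOpen U → x ∈ U → ∃ y ∈ U ∩ A, f y > M}

/-- `AZero f A` is the set `A^f_0`. -/
def AZero {X : Type*} [TopologicalSpace X] (f : X → ℝ) (A : Set X) : Set X :=
  closure A \ AInf f A

/-!
Outside `A^f_∞` the function is bounded on `U ∩ A` for some open `U ∋ x`, so, being nonnegative,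
it takes values in a compact interval `[0, M]` there. A closed graph makes preimages of compact
sets closed, so `f` still takes values in `[0, M]` on `U ∩ Cl(A)`. Finally, along any filter
converging to `x` the only possible cluster value of a closed-graph function is `f x`; with values
trapped in a compact set this forces convergence to `f x`.
-/

open Filter Topology Set

section ClosedGraph

variable {X Y : Type*} [TopologicalSpace X] [TopologicalSpace Y] {f : X → Y}

theorem eq_of_mapClusterPt_of_isClosed_graph (hf : IsClosed {p : X × Y | p.2 = f p.1})
    {l : Filter X} {x : X} {y : Y} (hl : l ≤ 𝓝 x) (hy : MapClusterPt y l f) : y = f x := by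
  obtain ⟨U, hUl, hU⟩ := mapClusterPt_iff_ultrafilter.1 hy
  exact hf.mem_of_tendsto ((tendsto_id.mono_left (hUl.trans hl)).prodMk_nhds hU)
    (Eventually.of_forall fun _ => rfl)

theorem IsCompact.isClosed_preimage_of_isClosed_graph {K : Set Y} (hK : IsCompact K)
    (hf : IsClosed {p : X × Y | p.2 = f p.1}) : IsClosed (f ⁻¹' K) := by
  refine isClosed_of_closure_subset fun x hx => ?_
  obtain ⟨y, hyK, hy⟩ :=
    hK.exists_mapClusterPt_of_frequently (f := f) (mem_closure_iff_frequently.1 hx)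
  rwa [eq_of_mapClusterPt_of_isClosed_graph hf le_rfl hy] at hyK

theorem IsCompact.tendsto_of_isClosed_graph {K : Set Y} (hK : IsCompact K)
    (hf : IsClosed {p : X × Y | p.2 = f p.1}) {l : Filter X} {x : X} (hl : l ≤ 𝓝 x)
    (hfK : ∀ᶠ z in l, f z ∈ K) : Tendsto f l (𝓝 (f x)) :=
  hK.tendsto_nhds_of_unique_mapClusterPt hfK fun _ _ hy =>
    eq_of_mapClusterPt_of_isClosed_graph hf hl hy

end ClosedGraph

theorem restriction_continuous_on_aZero
    {X : Type*} [TopologicalSpace X] (f : X → ℝ) (hnonneg : ∀ x, 0 ≤ f x)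
    (hclosed : IsClosed {p : X × ℝ | p.2 = f p.1}) (A : Set X) :
    ∀ x ∈ AZero f A, ContinuousWithinAt f (closure A) x := by
  rintro x ⟨hxA, hx⟩
  obtain ⟨M, -, U, hU, hxU, hbound⟩ :
      ∃ M > (0 : ℝ), ∃ U : Set X, IsOpen U ∧ x ∈ U ∧ ∀ y ∈ U ∩ A, f y ≤ M := by
    simpa [AInf, hxA] using hx
  have hIcc : IsCompact (Icc 0 M) := isCompact_Icc
  have hUA : U ∩ closure A ⊆ f ⁻¹' Icc 0 M :=
    hU.inter_closure.trans <|
      (hIcc.isClosed_preimage_of_isClosed_graph hclosed).closure_subset_iff.2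
        fun y hy => ⟨hnonneg y, hbound y hy⟩
  refine hIcc.tendsto_of_isClosed_graph hclosed nhdsWithin_le_nhds ?_
  filter_upwards [inter_mem_nhdsWithin (closure A) (hU.mem_nhds hxU)] with y hy
  exact hUA ⟨hy.2, hy.1⟩
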